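/- arXiv:1201.0986 — 3 statements merged into one kernel-verified Lean document; each statement's English description precedes it below -/
import Mathlib

section
/- Let (X,d) be a complete bounded metric space and L : X → X a k-Lipschitz mapping. Suppose there exist constants 0 < γ < 1 and c > 0 such that d(L^{n+1}x, L^n x) ≤ c·γ^n for every x ∈ X and every n ∈ ℕ. Then for each x ∈ X the sequence (L^n x) converges, and the mapping R defined by Rx = lim_{n→∞} L^n x is Hölder continuous: there exist constants K > 0 and 0 < α < 1 such that d(Rx, Ry) ≤ K·d(x,y)^α for all x, y ∈ X. -/
/-!
Comparing `R x` and `R y` with the `n`-th iterates gives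
`d(Rx, Ry) ≤ 2c/(1-γ) · γⁿ + kⁿ · d(x, y)` for every `n`. For `d(x, y) < 1`, choosing `n`
of size `log d(x, y) / (log γ - log k)` balances the two terms, both becoming a multiple of
`d(x, y) ^ α` with `α = log γ / (log γ - log k)`; for `d(x, y) ≥ 1` boundedness of `X` suffices.
-/

open Filter Topology NNReal Real

lemma exists_pow_le_rpow_and_pow_mul_le {γ k d : ℝ} (hγ0 : 0 < γ) (hγ1 : γ < 1) (hk : 1 ≤ k)
    (hd0 : 0 < d) (hd1 : d ≤ 1) :
    ∃ n : ℕ, γ ^ n ≤ d ^ (log γ / (log γ - log k)) ∧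
      k ^ n * d ≤ k * d ^ (log γ / (log γ - log k)) := by
  have hlogγ : log γ < 0 := log_neg hγ0 hγ1
  have hgap : 0 < log k - log γ := by linarith [log_nonneg hk]
  have hgap' : log γ - log k ≠ 0 := by linarith
  set t := -log d / (log k - log γ) with ht
  have ht0 : 0 ≤ t := div_nonneg (neg_nonneg.mpr (log_nonpos hd0.le hd1)) hgap.le
  have hγt : γ ^ t = d ^ (log γ / (log γ - log k)) := by
    rw [rpow_def_of_pos hγ0, rpow_def_of_pos hd0, ht]
    congr 1
    field_simp
    ring
  have hkt : k ^ t * d = d ^ (log γ / (log γ - log k)) := by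
    rw [rpow_def_of_pos (by linarith), rpow_def_of_pos hd0, ← exp_log hd0, ← exp_add, log_exp, ht]
    congr 1
    field_simp
    ring
  refine ⟨⌈t⌉₊, ?_, ?_⟩
  · rw [← hγt, ← Real.rpow_natCast]
    exact rpow_le_rpow_of_exponent_ge hγ0 hγ1.le (Nat.le_ceil t)
  · calc k ^ ⌈t⌉₊ * d ≤ k ^ (t + 1) * d := by
          rw [← Real.rpow_natCast]
          exact mul_le_mul_of_nonneg_right
            (rpow_le_rpow_of_exponent_le hk (Nat.ceil_lt_add_one ht0).le) hd0.le
      _ = k * d ^ (log γ / (log γ - log k)) := by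
          rw [Real.rpow_add (by linarith), Real.rpow_one, ← hkt]
          ring

lemma log_div_log_sub_log_mem_Ioo {γ k : ℝ} (hγ0 : 0 < γ) (hγ1 : γ < 1) (hk : 1 < k) :
    log γ / (log γ - log k) ∈ Set.Ioo 0 1 := by
  have hlogγ : log γ < 0 := log_neg hγ0 hγ1
  have hlogk : 0 < log k := log_pos hk
  constructor
  · exact div_pos_of_neg_of_neg hlogγ (by linarith)
  · rw [div_lt_one_of_neg (by linarith)]
    linarith

lemma dist_le_mul_rpow_of_le_geometric_add_pow_mul {X Y : Type*} [MetricSpace X]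
    [PseudoMetricSpace Y] {f : X → Y} {A D γ k : ℝ} (hA : 0 ≤ A) (hγ0 : 0 < γ) (hγ1 : γ < 1)
    (hk : 1 ≤ k) (hD : ∀ x y, dist (f x) (f y) ≤ D)
    (hf : ∀ x y (n : ℕ), dist (f x) (f y) ≤ A * γ ^ n + k ^ n * dist x y) (x y : X) :
    dist (f x) (f y) ≤ max D (A + k) * dist x y ^ (log γ / (log γ - log k)) := by
  set α := log γ / (log γ - log k)
  have hdα : 0 ≤ dist x y ^ α := rpow_nonneg dist_nonneg α
  rcases eq_or_ne x y with rfl | hxy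
  · rw [dist_self]
    exact mul_nonneg (le_max_of_le_right (by linarith)) hdα
  rcases le_or_gt 1 (dist x y) with hd1 | hd1
  · calc dist (f x) (f y) ≤ D * 1 := by rw [mul_one]; exact hD x y
      _ ≤ D * dist x y ^ α := by
          gcongr
          · exact dist_nonneg.trans (hD x y)
          · exact one_le_rpow hd1 (div_nonneg_of_nonpos (log_nonpos hγ0.le hγ1.le)
              (by linarith [log_nonneg hk, log_nonpos hγ0.le hγ1.le]))
      _ ≤ max D (A + k) * dist x y ^ α := by gcongr; exact le_max_left _ _
  · obtain ⟨n, hγn, hkn⟩ :=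
      exists_pow_le_rpow_and_pow_mul_le hγ0 hγ1 hk (dist_pos.mpr hxy) hd1.le
    calc dist (f x) (f y) ≤ A * γ ^ n + k ^ n * dist x y := hf x y n
      _ ≤ A * dist x y ^ α + k * dist x y ^ α := by gcongr
      _ = (A + k) * dist x y ^ α := by ring
      _ ≤ max D (A + k) * dist x y ^ α := by gcongr; exact le_max_right _ _

lemma dist_le_of_tendsto_iterate {X : Type*} [MetricSpace X] {L : X → X} {k : ℝ≥0}
    (hL : LipschitzWith k L) {γ c : ℝ} (hγ1 : γ < 1)
    (hstep : ∀ (x : X) (n : ℕ), dist (L^[n] x) (L^[n + 1] x) ≤ c * γ ^ n) {R : X → X}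
    (hR : ∀ x, Tendsto (fun n => L^[n] x) atTop (𝓝 (R x))) (x y : X) (n : ℕ) :
    dist (R x) (R y) ≤ 2 * (c / (1 - γ)) * γ ^ n + (k : ℝ) ^ n * dist x y := by
  have hx := dist_le_of_le_geometric_of_tendsto γ c hγ1 (hstep x) (hR x) n
  have hy := dist_le_of_le_geometric_of_tendsto γ c hγ1 (hstep y) (hR y) n
  have hxy := (hL.iterate n).dist_le_mul x y
  push_cast at hxy
  calc dist (R x) (R y)
      ≤ dist (R x) (L^[n] x) + dist (L^[n] x) (L^[n] y) + dist (L^[n] y) (R y) :=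
        dist_triangle4 _ _ _ _
    _ ≤ c * γ ^ n / (1 - γ) + (k : ℝ) ^ n * dist x y + c * γ ^ n / (1 - γ) := by
        rw [dist_comm (R x)]
        gcongr
    _ = 2 * (c / (1 - γ)) * γ ^ n + (k : ℝ) ^ n * dist x y := by ring

/-- Let `(X,d)` be a complete bounded metric space and `L : X → X`
a `k`-Lipschitz mapping such that `d(L^[n+1] x, L^[n] x) ≤ c * γ ^ n` for all `x` and `n`,
with `0 < γ < 1` and `c > 0`.  Then for each `x` the sequence of iterates `L^[n] x`
converges, and the limit map `R` is Hölder continuous. -/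
theorem stmt0 {X : Type*} [MetricSpace X] [CompleteSpace X]
    (hbd : Bornology.IsBounded (Set.univ : Set X))
    (L : X → X) (k : ℝ≥0) (hL : LipschitzWith k L)
    (γ c : ℝ) (hγ0 : 0 < γ) (hγ1 : γ < 1) (hc : 0 < c)
    (hiter : ∀ (x : X) (n : ℕ), dist (L^[n + 1] x) (L^[n] x) ≤ c * γ ^ n) :
    ∃ R : X → X,
      (∀ x : X, Tendsto (fun n => L^[n] x) atTop (nhds (R x))) ∧
      ∃ K α : ℝ, 0 < K ∧ 0 < α ∧ α < 1 ∧
        ∀ x y : X, dist (R x) (R y) ≤ K * dist x y ^ α := by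
  have hstep : ∀ (x : X) (n : ℕ), dist (L^[n] x) (L^[n + 1] x) ≤ c * γ ^ n := fun x n => by
    rw [dist_comm]; exact hiter x n
  choose R hR using fun x =>
    cauchySeq_tendsto_of_complete (cauchySeq_of_le_geometric γ c hγ1 (hstep x))
  obtain ⟨D, hD⟩ := Metric.isBounded_iff.mp hbd
  have hk : (1 : ℝ) < (max k 2 : ℝ≥0) := by
    exact_mod_cast one_lt_two.trans_le (le_max_right k 2)
  have hA : 0 ≤ 2 * (c / (1 - γ)) := by have := sub_pos.mpr hγ1; positivity
  obtain ⟨hα0, hα1⟩ := log_div_log_sub_log_mem_Ioo hγ0 hγ1 hk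
  refine ⟨R, hR, _, _, lt_max_of_lt_right (by linarith), hα0, hα1,
    dist_le_mul_rpow_of_le_geometric_add_pow_mul hA hγ0 hγ1 hk.le
      (fun x y => hD (Set.mem_univ (R x)) (Set.mem_univ (R y)))
      (dist_le_of_tendsto_iterate (hL.weaken (le_max_left k 2)) hγ1 hstep hR)⟩
end

section
/- Let (x_α)_{α∈A} be a bounded net in a Banach space X which converges to 0 weakly but not in norm. Then there exists an increasing sequence (α_n) of indices in A such that: lim_n ‖x_{α_n}‖ = limsup_α ‖x_α‖, the asymptotic diameter of the sequence (x_{α_n}) is at most D[(x_α)] := limsup_α limsup_β ‖x_α − x_β‖, and (x_{α_n}) is a basic sequence. -/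
open Filter Topology

/-!
Mazur's construction. The unit sphere of a finite-dimensional subspace `F` is compact, so finitely
many functionals of norm at most `1` norm it up to `ε / 2`. The net being weakly null, they are
eventually small on `x α`, and then every such `x α` of norm at least `r > 0` satisfies
`(1 - ε) ‖y‖ ≤ ‖y + t • x α‖` for all `y ∈ F`. Choosing `α n` recursively so that this holds for
the span of the earlier terms with `ε n = 2⁻ⁿ / 4`, while `‖x (α n)‖` is `ε n`-close to the limsup
and `x (α n)` is eventually within `D + ε n` of the net, gives a basic sequence with constant
`(1 - ∑ ε n)⁻¹ = 2`.
-/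

/-- The asymptotic diameter of a sequence: `inf_n sup_{m,k ≥ n} ‖y_m − y_k‖`. -/
noncomputable def asympDiam {X : Type*} [NormedAddCommGroup X] (y : ℕ → X) : ℝ :=
  ⨅ n : ℕ, sSup {d : ℝ | ∃ m ≥ n, ∃ k ≥ n, d = ‖y m - y k‖}

/-- A sequence is basic: there is `c > 0` such that
`‖∑_{i<q} t_i y_i‖ ≤ c ‖∑_{i<p} t_i y_i‖` for all `q ≤ p` and scalars `t_i`. -/
def IsBasicSeq {X : Type*} [NormedAddCommGroup X] [NormedSpace ℝ X] (y : ℕ → X) : Prop :=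
  ∃ c : ℝ, 0 < c ∧ ∀ p q : ℕ, q ≤ p → ∀ t : ℕ → ℝ,
    ‖∑ i ∈ Finset.range q, t i • y i‖ ≤ c * ‖∑ i ∈ Finset.range p, t i • y i‖

theorem exists_seq_forall_of_forall_exists {ι : Type*} [Nonempty ι]
    (P : ℕ → (ℕ → ι) → ι → Prop)
    (hP : ∀ n f g a, (∀ m < n, f m = g m) → P n f a → P n g a)
    (h : ∀ n f, (∀ m < n, P m f (f m)) → ∃ a, P n f a) :
    ∃ α : ℕ → ι, ∀ n, P n α (α n) := by
  let extend (n : ℕ) (β : ∀ m, m < n → ι) : ℕ → ι :=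
    fun m => if hm : m < n then β m hm else Classical.arbitrary ι
  obtain ⟨α, hα⟩ : ∃ α : ℕ → ι, ∀ n, α n = Classical.epsilon (P n (extend n fun m _ => α m)) :=
    ⟨Nat.strongRec fun n β => Classical.epsilon (P n (extend n β)), Nat.strongRec_eq _⟩
  have hext n : ∀ m < n, extend n (fun m _ => α m) m = α m := fun m hm => dif_pos hm
  refine ⟨α, fun n => Nat.strong_induction_on n fun n ih => ?_⟩
  refine hP n _ α _ (hext n) ?_
  rw [hα n]
  refine Classical.epsilon_spec (h n _ fun m hm => ?_)
  rw [hext n m hm]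
  exact hP m α _ _ (fun k hk => (hext n k (hk.trans hm)).symm) (ih m hm)

theorem IsCompact.exists_finite_norming {X : Type*} [NormedAddCommGroup X] [NormedSpace ℝ X]
    {K : Set X} (hK : IsCompact K) {δ : ℝ} (hδ : 0 < δ) :
    ∃ T : Set (X →L[ℝ] ℝ), T.Finite ∧ (∀ f ∈ T, ‖f‖ ≤ 1) ∧ ∀ u ∈ K, ∃ f ∈ T, ‖u‖ - δ < f u := by
  choose g hg_norm hg_eq using fun u : X => exists_dual_vector'' ℝ u
  have hcover : K ⊆ ⋃ u ∈ K, {w | ‖w‖ - δ < g u w} := fun u hu =>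
    Set.mem_biUnion hu (by simp [hg_eq, hδ])
  obtain ⟨b, -, hb, hbK⟩ := hK.elim_finite_subcover_image
    (fun u _ => isOpen_lt (by fun_prop) (g u).continuous) hcover
  refine ⟨g '' b, hb.image g, Set.forall_mem_image.2 fun u _ => hg_norm u, fun u hu => ?_⟩
  obtain ⟨w, hw, hlt⟩ := Set.mem_iUnion₂.1 (hbK hu)
  exact ⟨g w, Set.mem_image_of_mem g hw, hlt⟩

theorem Submodule.mul_norm_le_norm_add_smul_of_forall_norm_eq_one {X : Type*}
    [NormedAddCommGroup X] [NormedSpace ℝ X] {F : Submodule ℝ X} {v : X} {c : ℝ}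
    (h : ∀ u ∈ F, ‖u‖ = 1 → ∀ s : ℝ, c ≤ ‖u + s • v‖) (y : X) (hy : y ∈ F) (t : ℝ) :
    c * ‖y‖ ≤ ‖y + t • v‖ := by
  rcases eq_or_ne y 0 with rfl | hy0
  · simp
  have hpos : 0 < ‖y‖ := norm_pos_iff.2 hy0
  have hunit : ‖‖y‖⁻¹ • y‖ = 1 := by rw [norm_smul, norm_inv, norm_norm, inv_mul_cancel₀ hpos.ne']
  have hscale : y + t • v = ‖y‖ • (‖y‖⁻¹ • y + (‖y‖⁻¹ * t) • v) := by
    rw [smul_add, smul_smul, smul_smul, mul_inv_cancel₀ hpos.ne', ← mul_assoc,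
      mul_inv_cancel₀ hpos.ne', one_smul, one_mul]
  calc c * ‖y‖ ≤ ‖‖y‖⁻¹ • y + (‖y‖⁻¹ * t) • v‖ * ‖y‖ :=
        mul_le_mul_of_nonneg_right (h _ (F.smul_mem _ hy) hunit _) hpos.le
    _ = ‖y + t • v‖ := by rw [hscale, norm_smul, norm_norm, mul_comm]

theorem Submodule.eventually_mul_norm_le_norm_add_smul {X : Type*} [NormedAddCommGroup X]
    [NormedSpace ℝ X] (F : Submodule ℝ X) [FiniteDimensional ℝ F] {β : Type*} {l : Filter β}
    {v : β → X} (hv : ∀ f : X →L[ℝ] ℝ, Tendsto (fun b => f (v b)) l (𝓝 0)) {ε r : ℝ}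
    (hε : 0 < ε) (hr : 0 < r) :
    ∀ᶠ b in l, r ≤ ‖v b‖ → ∀ y ∈ F, ∀ t : ℝ, (1 - ε) * ‖y‖ ≤ ‖y + t • v b‖ := by
  have hK : IsCompact (((↑) : F → X) '' Metric.sphere 0 1) :=
    (isCompact_sphere 0 1).image continuous_subtype_val
  obtain ⟨T, hT, hT_norm, hT_norming⟩ := hK.exists_finite_norming (half_pos hε)
  have hsmall : ∀ᶠ b in l, ∀ f ∈ T, |f (v b)| < ε * r / 4 :=
    hT.eventually_all.2 fun f _ => by
      simpa using (hv f).eventually (eventually_abs_sub_lt 0 (by positivity : 0 < ε * r / 4))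
  filter_upwards [hsmall] with b hb hvr
  refine F.mul_norm_le_norm_add_smul_of_forall_norm_eq_one fun u hu hu1 s => ?_
  rcases le_or_gt (2 / r) |s| with hs | hs
  · have : 2 ≤ ‖s • v b‖ := by
      rw [norm_smul, Real.norm_eq_abs]
      calc (2 : ℝ) = 2 / r * r := by field_simp
        _ ≤ |s| * ‖v b‖ := by gcongr
    have := norm_sub_norm_le (s • v b) (-u)
    rw [sub_neg_eq_add, norm_neg, hu1, add_comm] at this
    linarith
  · obtain ⟨f, hfT, hfu⟩ := hT_norming u ⟨⟨u, hu⟩, by simpa using hu1, rfl⟩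
    have hfv : |s * f (v b)| ≤ ε / 2 := by
      rw [abs_mul]
      calc |s| * |f (v b)| ≤ 2 / r * (ε * r / 4) := by gcongr; exact (hb f hfT).le
        _ = ε / 2 := by field_simp; ring
    calc 1 - ε ≤ f (u + s • v b) := by
          rw [map_add, map_smul, smul_eq_mul, ← hu1]; linarith [neg_abs_le (s * f (v b))]
      _ ≤ ‖f‖ * ‖u + s • v b‖ := (le_abs_self _).trans (f.le_opNorm _)
      _ ≤ ‖u + s • v b‖ := mul_le_of_le_one_left (norm_nonneg _) (hT_norm f hfT)

theorem asympDiam_le_of_norm_sub_le {X : Type*} [NormedAddCommGroup X] {y : ℕ → X} {b : ℕ → ℝ}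
    {D : ℝ} (hb : Antitone b) (hbD : Tendsto b atTop (𝓝 D))
    (hy : ∀ m k, m < k → ‖y m - y k‖ ≤ b m) : asympDiam y ≤ D := by
  have hsup n : sSup {d : ℝ | ∃ m ≥ n, ∃ k ≥ n, d = ‖y m - y k‖} ≤ b n := by
    refine csSup_le ⟨_, n, le_rfl, n, le_rfl, rfl⟩ ?_
    rintro _ ⟨m, hm, k, hk, rfl⟩
    rcases lt_trichotomy m k with hmk | rfl | hkm
    · exact (hy m k hmk).trans (hb hm)
    · simpa using (norm_nonneg _).trans (hy n (n + 1) n.lt_succ_self)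
    · rw [norm_sub_rev]; exact (hy k m hkm).trans (hb hk)
  have hbdd : BddBelow (Set.range fun n => sSup {d : ℝ | ∃ m ≥ n, ∃ k ≥ n, d = ‖y m - y k‖}) :=
    ⟨0, Set.forall_mem_range.2 fun n => Real.sSup_nonneg fun _ ⟨_, _, _, _, hd⟩ =>
      hd ▸ norm_nonneg _⟩
  exact ge_of_tendsto' hbD fun n => (ciInf_le hbdd n).trans (hsup n)

theorem isBasicSeq_of_mul_norm_le_norm_add_smul {X : Type*} [NormedAddCommGroup X]
    [NormedSpace ℝ X] {y : ℕ → X} {ε : ℕ → ℝ} {δ : ℝ} (hε : ∀ n, 0 ≤ ε n)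
    (hsum : ∀ N, ∑ n ∈ Finset.range N, ε n ≤ δ) (hδ : δ < 1)
    (hy : ∀ n, ∀ z ∈ Submodule.span ℝ (y '' Set.Iio n), ∀ t : ℝ,
      (1 - ε n) * ‖z‖ ≤ ‖z + t • y n‖) :
    IsBasicSeq y := by
  refine ⟨(1 - δ)⁻¹, inv_pos.2 (sub_pos.2 hδ), fun p q hqp t => ?_⟩
  set S : ℕ → X := fun j => ∑ i ∈ Finset.range j, t i • y i
  have hS_mem j : S j ∈ Submodule.span ℝ (y '' Set.Iio j) :=
    Submodule.sum_mem _ fun i hi => Submodule.smul_mem _ _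
      (Submodule.subset_span ⟨i, Finset.mem_range.1 hi, rfl⟩)
  have hsum_Ico p : ∑ j ∈ Finset.Ico q p, ε j ≤ δ :=
    (Finset.sum_le_sum_of_subset_of_nonneg
      (fun j hj => Finset.mem_range.2 (Finset.mem_Ico.1 hj).2) fun j _ _ => hε j).trans
      (hsum p)
  have key : ∀ n, q ≤ n → (1 - ∑ j ∈ Finset.Ico q n, ε j) * ‖S q‖ ≤ ‖S n‖ := by
    intro n hqn
    induction n, hqn using Nat.le_induction with
    | base => simp
    | succ n hqn ih =>
      have hεn : ε n ≤ 1 := ((Finset.single_le_sum (fun j _ => hε j)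
        (Finset.self_mem_range_succ n)).trans (hsum (n + 1))).trans hδ.le
      have hA : 0 ≤ ∑ j ∈ Finset.Ico q n, ε j := Finset.sum_nonneg fun j _ => hε j
      calc (1 - ∑ j ∈ Finset.Ico q (n + 1), ε j) * ‖S q‖
          ≤ (1 - ε n) * ((1 - ∑ j ∈ Finset.Ico q n, ε j) * ‖S q‖) := by
            rw [Finset.sum_Ico_succ_top hqn]
            nlinarith [mul_nonneg (mul_nonneg (hε n) hA) (norm_nonneg (S q))]
        _ ≤ (1 - ε n) * ‖S n‖ := by gcongr
        _ ≤ ‖S (n + 1)‖ := by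
            simpa only [S, Finset.sum_range_succ] using hy n (S n) (hS_mem n) (t n)
  rw [le_inv_mul_iff₀ (sub_pos.2 hδ)]
  calc (1 - δ) * ‖S q‖ ≤ (1 - ∑ j ∈ Finset.Ico q p, ε j) * ‖S q‖ := by
        gcongr; exact hsum_Ico p
    _ ≤ ‖S p‖ := key p hqp

theorem Filter.limsup_pos_of_not_tendsto_zero {β : Type*} {l : Filter β} {u : β → ℝ}
    (hu0 : ∀ b, 0 ≤ u b) (hu : IsBoundedUnder (· ≤ ·) l u) (h : ¬ Tendsto u l (𝓝 0)) :
    0 < limsup u l := by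
  rcases l.eq_or_neBot with rfl | _
  · exact absurd tendsto_bot h
  by_contra! hle
  exact h (tendsto_of_le_liminf_of_limsup_le (le_liminf_of_le hu.isCoboundedUnder_ge
    (Eventually.of_forall hu0)) hle hu (isBoundedUnder_of ⟨0, hu0⟩))

theorem Filter.frequently_dist_limsup_lt {β : Type*} {l : Filter β} {u : β → ℝ}
    (hu : IsBoundedUnder (· ≤ ·) l u) (hu' : IsCoboundedUnder (· ≤ ·) l u) {ε : ℝ} (hε : 0 < ε) :
    ∃ᶠ b in l, dist (u b) (limsup u l) < ε :=
  ((frequently_lt_of_lt_limsup hu' (sub_lt_self _ hε)).and_eventually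
    (eventually_lt_of_limsup_lt (lt_add_of_pos_right _ hε) hu)).mono fun _ hb => by
      rw [Real.dist_eq, abs_sub_lt_iff]; constructor <;> linarith [hb.1, hb.2]

theorem Filter.eventually_eventually_lt_of_limsup_limsup_lt {α β : Type*} {l : Filter α}
    {l' : Filter β} [l'.NeBot] {u : α → β → ℝ} {C c : ℝ} (hu0 : ∀ a b, 0 ≤ u a b)
    (huC : ∀ a b, u a b ≤ C) (h : limsup (fun a => limsup (u a) l') l < c) :
    ∀ᶠ a in l, ∀ᶠ b in l', u a b < c :=
  (eventually_lt_of_limsup_lt h (isBoundedUnder_of ⟨C, fun a =>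
    limsup_le_of_le (isCoboundedUnder_le_of_le l' (hu0 a)) (Eventually.of_forall (huC a))⟩)).mono
    fun a ha => eventually_lt_of_limsup_lt ha (isBoundedUnder_of ⟨C, huC a⟩)

theorem noMaxOrder_of_weakly_tendsto_zero {X : Type*} [NormedAddCommGroup X] [NormedSpace ℝ X]
    {ι : Type*} [SemilatticeSup ι] {x : ι → X}
    (hweak : ∀ f : X →L[ℝ] ℝ, Tendsto (fun α => f (x α)) atTop (𝓝 0))
    (hnorm : ¬ Tendsto (fun α => ‖x α‖) atTop (𝓝 0)) : NoMaxOrder ι := by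
  refine ⟨fun a => ?_⟩
  by_contra! ha
  have hmax : IsMax a := fun b hab => (hab.lt_or_eq.resolve_left (ha b)).ge
  rw [atTop_eq_pure_of_isTop hmax.isTop] at hweak hnorm
  have hxa : x a = 0 := SeparatingDual.eq_zero_of_forall_dual_eq_zero (R := ℝ) fun f =>
    tendsto_nhds_unique (tendsto_pure_nhds _ a) (hweak f)
  exact hnorm (by simpa [hxa] using tendsto_pure_nhds (fun α => ‖x α‖) a)

theorem exists_strictMono_mazur_seq {X : Type*} [NormedAddCommGroup X] [NormedSpace ℝ X]
    {ι : Type*} [Nonempty ι] [SemilatticeSup ι] [NoMaxOrder ι] (x : ι → X)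
    (hweak : ∀ f : X →L[ℝ] ℝ, Tendsto (fun α => f (x α)) atTop (𝓝 0)) {L D : ℝ} (hL : 0 < L)
    (hnorm : ∀ ε > 0, ∃ᶠ α in atTop, dist ‖x α‖ L < ε)
    (hdiam : ∀ ε > 0, ∀ᶠ α in atTop, ∀ᶠ β in atTop, ‖x α - x β‖ < D + ε)
    {ε : ℕ → ℝ} (hε : ∀ n, 0 < ε n) :
    ∃ α : ℕ → ι, StrictMono α ∧ (∀ n, dist ‖x (α n)‖ L < ε n) ∧
      (∀ m n, m < n → ‖x (α m) - x (α n)‖ < D + ε m) ∧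
      ∀ n, ∀ z ∈ Submodule.span ℝ ((fun m => x (α m)) '' Set.Iio n), ∀ t : ℝ,
        (1 - ε n) * ‖z‖ ≤ ‖z + t • x (α n)‖ := by
  let P (n : ℕ) (f : ℕ → ι) (a : ι) : Prop :=
    (∀ m < n, f m < a) ∧ dist ‖x a‖ L < ε n ∧ (∀ᶠ β in atTop, ‖x a - x β‖ < D + ε n) ∧
      (∀ m < n, ‖x (f m) - x a‖ < D + ε m) ∧
      ∀ z ∈ Submodule.span ℝ ((fun m => x (f m)) '' Set.Iio n), ∀ t : ℝ,
        (1 - ε n) * ‖z‖ ≤ ‖z + t • x a‖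
  have hP n f g a (hfg : ∀ m < n, f m = g m) : P n f a → P n g a := by
    have hspan : (fun m => x (f m)) '' Set.Iio n = (fun m => x (g m)) '' Set.Iio n :=
      Set.image_congr fun m hm => by rw [hfg m hm]
    rintro ⟨hlt, hnear, hlater, hdist, hmazur⟩
    exact ⟨fun m hm => hfg m hm ▸ hlt m hm, hnear, hlater, fun m hm => hfg m hm ▸ hdist m hm,
      hspan ▸ hmazur⟩
  have hstep n f (hf : ∀ m < n, P m f (f m)) : ∃ a, P n f a := by
    have : FiniteDimensional ℝ (Submodule.span ℝ ((fun m => x (f m)) '' Set.Iio n)) :=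
      FiniteDimensional.span_of_finite ℝ ((Set.finite_Iio n).image _)
    have hlt : ∀ᶠ a in atTop, ∀ m < n, f m < a :=
      (Set.finite_Iio n).eventually_all.2 fun m _ => eventually_gt_atTop (f m)
    have hdist : ∀ᶠ a in atTop, ∀ m < n, ‖x (f m) - x a‖ < D + ε m :=
      (Set.finite_Iio n).eventually_all.2 fun m hm => (hf m hm).2.2.1
    obtain ⟨a, ha_near, ha_later, ha_lt, ha_dist, ha_mazur⟩ :=
      ((hnorm _ (lt_min (hε n) (half_pos hL))).and_eventually ((hdiam _ (hε n)).and (hlt.and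
        (hdist.and (Submodule.eventually_mul_norm_le_norm_add_smul
          (Submodule.span ℝ ((fun m => x (f m)) '' Set.Iio n)) hweak (hε n)
          (half_pos hL)))))).exists
    have hxa : L / 2 ≤ ‖x a‖ := by
      have := (lt_min_iff.1 ha_near).2
      rw [Real.dist_eq, abs_sub_lt_iff] at this
      linarith
    exact ⟨a, ha_lt, (lt_min_iff.1 ha_near).1, ha_later, ha_dist, ha_mazur hxa⟩
  obtain ⟨α, hα⟩ := exists_seq_forall_of_forall_exists P hP hstep
  exact ⟨α, strictMono_nat_of_lt_succ fun n => (hα (n + 1)).1 n n.lt_succ_self,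
    fun n => (hα n).2.1, fun m n hmn => (hα n).2.2.2.1 m hmn, fun n => (hα n).2.2.2.2⟩

theorem stmt4_general {X : Type*} [NormedAddCommGroup X] [NormedSpace ℝ X]
    {ι : Type*} [Nonempty ι] [SemilatticeSup ι]
    (x : ι → X)
    (hbd : BddAbove (Set.range fun α => ‖x α‖))
    (hweak : ∀ f : X →L[ℝ] ℝ, Tendsto (fun α => f (x α)) atTop (nhds 0))
    (hnotnorm : ¬ Tendsto (fun α => ‖x α‖) atTop (nhds 0)) :
    ∃ α : ℕ → ι, StrictMono α ∧
      Tendsto (fun n => ‖x (α n)‖) atTop (nhds (limsup (fun β => ‖x β‖) atTop)) ∧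
      asympDiam (fun n => x (α n)) ≤
        limsup (fun β => limsup (fun γ => ‖x β - x γ‖) atTop) atTop ∧
      IsBasicSeq (fun n => x (α n)) := by
  have := noMaxOrder_of_weakly_tendsto_zero hweak hnotnorm
  obtain ⟨M, hM⟩ : ∃ M, ∀ α, ‖x α‖ ≤ M := hbd.imp fun M hM α => hM ⟨α, rfl⟩
  have hbdd : IsBoundedUnder (· ≤ ·) atTop fun α => ‖x α‖ := isBoundedUnder_of ⟨M, hM⟩
  have hpair α β : ‖x α - x β‖ ≤ 2 * M := (norm_sub_le _ _).trans (by linarith [hM α, hM β])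
  set ε : ℕ → ℝ := fun n => (1 / 2) ^ n / 4
  have hε_anti : Antitone ε := fun m n hmn =>
    div_le_div_of_nonneg_right (pow_le_pow_of_le_one (by norm_num) (by norm_num) hmn) (by norm_num)
  have hε_lim : Tendsto ε atTop (𝓝 0) := by
    simpa [ε] using (tendsto_pow_atTop_nhds_zero_of_lt_one (by norm_num : (0 : ℝ) ≤ 1 / 2)
      (by norm_num)).div_const 4
  obtain ⟨α, hα_mono, hα_norm, hα_diam, hα_mazur⟩ := exists_strictMono_mazur_seq x hweak
    (limsup_pos_of_not_tendsto_zero (fun α => norm_nonneg _) hbdd hnotnorm)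
    (fun _ => frequently_dist_limsup_lt hbdd
      (isCoboundedUnder_le_of_le atTop fun α => norm_nonneg _))
    (fun _ hδ => eventually_eventually_lt_of_limsup_limsup_lt (fun _ _ => norm_nonneg _) hpair
      (lt_add_of_pos_right _ hδ))
    (ε := ε) fun n => by positivity
  refine ⟨α, hα_mono, ?_, ?_, ?_⟩
  · exact tendsto_iff_dist_tendsto_zero.2
      (squeeze_zero (fun _ => dist_nonneg) (fun n => (hα_norm n).le) hε_lim)
  · exact asympDiam_le_of_norm_sub_le (b := fun n => _ + ε n)
      (fun m n hmn => by simpa using hε_anti hmn)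
      (by simpa using hε_lim.const_add _) fun m n hmn => (hα_diam m n hmn).le
  · refine isBasicSeq_of_mul_norm_le_norm_add_smul (fun n => by positivity) (fun N => ?_)
      (by norm_num : (1 / 2 : ℝ) < 1) hα_mazur
    simp only [ε, ← Finset.sum_div]
    linarith [sum_geometric_two_le N]

/-- Let `(x_α)` be a bounded net in a Banach space converging to `0`
weakly but not in norm.  Then there is an increasing sequence `(α_n)` of indices such
that `lim_n ‖x_{α_n}‖ = limsup_α ‖x_α‖`, the asymptotic diameter of `(x_{α_n})` is at
most `D[(x_α)] = limsup_α limsup_β ‖x_α − x_β‖`, and `(x_{α_n})` is a basic sequence. -/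
theorem stmt4 {X : Type*} [NormedAddCommGroup X] [NormedSpace ℝ X] [CompleteSpace X]
    {ι : Type*} [Nonempty ι] [SemilatticeSup ι]
    (x : ι → X)
    (hbd : BddAbove (Set.range fun α => ‖x α‖))
    (hweak : ∀ f : X →L[ℝ] ℝ, Tendsto (fun α => f (x α)) atTop (nhds 0))
    (hnotnorm : ¬ Tendsto (fun α => ‖x α‖) atTop (nhds 0)) :
    ∃ α : ℕ → ι, StrictMono α ∧
      Tendsto (fun n => ‖x (α n)‖) atTop (nhds (limsup (fun β => ‖x β‖) atTop)) ∧
      asympDiam (fun n => x (α n)) ≤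
        limsup (fun β => limsup (fun γ => ‖x β - x γ‖) atTop) atTop ∧
      IsBasicSeq (fun n => x (α n)) :=
  stmt4_general x hbd hweak hnotnorm
end

section
/- For any Banach space X, the normal structure coefficient N(X) equals sup{k : k·r_a(x_α) ≤ diam_a(x_α) for every bounded net (x_α) in X}, where r_a(x_α) = inf{limsup_α ‖x_α − y‖ : y ∈ closed convex hull of {x_α : α ∈ A}} and diam_a is the asymptotic diameter of the net. -/
open Filter Topology

universe u

variable {X : Type*} [NormedAddCommGroup X] [NormedSpace ℝ X]

/-- The Chebyshev radius of a set relative to itself: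
`r(K) = inf_{y ∈ K} sup_{x ∈ K} ‖x − y‖`. -/
noncomputable def chebRadius (K : Set X) : ℝ :=
  sInf {r : ℝ | ∃ y ∈ K, r = sSup {d : ℝ | ∃ x ∈ K, d = ‖x - y‖}}

/-- The normal structure coefficient
`N(X) = sup{k : k·r(K) ≤ diam K for each bounded convex K ⊆ X}`. -/
noncomputable def normalStructureCoeff (X : Type*) [NormedAddCommGroup X]
    [NormedSpace ℝ X] : ℝ :=
  sSup {k : ℝ | ∀ K : Set X, K.Nonempty → Convex ℝ K → Bornology.IsBounded K →
    k * chebRadius K ≤ Metric.diam K}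

/-- The asymptotic diameter of a net: `inf_α sup_{β,γ ≥ α} ‖x_β − x_γ‖`. -/
noncomputable def asympDiamNet {ι : Type*} [Preorder ι] (x : ι → X) : ℝ :=
  sInf {s : ℝ | ∃ α : ι, s = sSup {d : ℝ | ∃ β ≥ α, ∃ γ ≥ α, d = ‖x β - x γ‖}}

/-- The asymptotic radius `r_a` of a net relative to the closed convex hull of its
range. -/
noncomputable def asympRadNet {ι : Type*} [Preorder ι] (x : ι → X) : ℝ :=
  sInf {r : ℝ | ∃ y ∈ closure (convexHull ℝ (Set.range x)),
    r = limsup (fun α => ‖x α - y‖) atTop}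

/-! Both suprema run over the same constants `k`. For a bounded net, the closed convex hull
`C_α` of the tail `{x_β : β ≥ α}` lies in the closed convex hull of the net, which eventually
stays in `C_α`; hence `r_a ≤ r(C_α)`, while `diam C_α` is the supremum of `‖x_β − x_γ‖` over
`β, γ ≥ α`. Conversely, a bounded convex set `K` is the range of a net indexed by the finite
multisets of `K` that visits every point of `K` cofinally (it picks the element of strictly
largest multiplicity), and for that net `r(K) ≤ r_a` and `diam_a ≤ diam K`. -/

noncomputable def chebRadiusAt (K : Set X) (y : X) : ℝ :=
  sSup {d : ℝ | ∃ x ∈ K, d = ‖x - y‖}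

noncomputable def tailDiam {ι : Type*} [Preorder ι] (x : ι → X) (α : ι) : ℝ :=
  sSup {d : ℝ | ∃ β ≥ α, ∃ γ ≥ α, d = ‖x β - x γ‖}

open Bornology Metric Set

section ChebRadius

variable {E : Type*} [NormedAddCommGroup E] {K : Set E} {x y z : E}

theorem chebRadiusAt_nonneg : 0 ≤ chebRadiusAt K y :=
  Real.sSup_nonneg <| by rintro _ ⟨x, -, rfl⟩; exact norm_nonneg _

theorem chebRadius_nonneg (K : Set E) : 0 ≤ chebRadius K :=
  Real.sInf_nonneg <| by rintro _ ⟨y, -, rfl⟩; exact chebRadiusAt_nonneg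

theorem norm_sub_le_chebRadiusAt (hK : IsBounded K) (hx : x ∈ K) :
    ‖x - y‖ ≤ chebRadiusAt K y := by
  obtain ⟨r, hr⟩ := hK.subset_closedBall y
  refine le_csSup ⟨r, ?_⟩ ⟨x, hx, rfl⟩
  rintro _ ⟨x', hx', rfl⟩
  simpa [dist_eq_norm] using hr hx'

theorem chebRadiusAt_le {r : ℝ} (hK : K.Nonempty) (h : ∀ x ∈ K, ‖x - y‖ ≤ r) :
    chebRadiusAt K y ≤ r :=
  csSup_le (hK.elim fun x hx => ⟨_, x, hx, rfl⟩) <| by rintro _ ⟨x, hx, rfl⟩; exact h x hx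

theorem chebRadius_le_chebRadiusAt (hy : y ∈ K) : chebRadius K ≤ chebRadiusAt K y :=
  csInf_le ⟨0, by rintro _ ⟨y, -, rfl⟩; exact chebRadiusAt_nonneg⟩ ⟨y, hy, rfl⟩

theorem le_chebRadius {r : ℝ} (hK : K.Nonempty) (h : ∀ y ∈ K, r ≤ chebRadiusAt K y) :
    r ≤ chebRadius K :=
  le_csInf (hK.elim fun y hy => ⟨_, y, hy, rfl⟩) <| by rintro _ ⟨y, hy, rfl⟩; exact h y hy

theorem chebRadiusAt_le_add (hK : IsBounded K) (hne : K.Nonempty) :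
    chebRadiusAt K y ≤ chebRadiusAt K z + ‖z - y‖ :=
  chebRadiusAt_le hne fun x hx => calc
    ‖x - y‖ ≤ ‖x - z‖ + ‖z - y‖ := norm_sub_le_norm_sub_add_norm_sub x z y
    _ ≤ chebRadiusAt K z + ‖z - y‖ := by gcongr; exact norm_sub_le_chebRadiusAt hK hx

theorem chebRadius_le_chebRadiusAt_of_mem_closure (hK : IsBounded K) (hz : z ∈ closure K) :
    chebRadius K ≤ chebRadiusAt K z := by
  refine le_of_forall_pos_le_add fun ε hε => ?_
  obtain ⟨y, hy, hyz⟩ := Metric.mem_closure_iff.1 hz ε hε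
  calc chebRadius K ≤ chebRadiusAt K y := chebRadius_le_chebRadiusAt hy
    _ ≤ chebRadiusAt K z + ‖z - y‖ := chebRadiusAt_le_add hK ⟨y, hy⟩
    _ ≤ chebRadiusAt K z + ε := by rw [← dist_eq_norm]; gcongr

end ChebRadius

theorem Real.limsup_nonneg {ι : Type*} {l : Filter ι} [l.NeBot] {f : ι → ℝ} (hf : ∀ i, 0 ≤ f i) :
    0 ≤ limsup f l := by
  by_cases hb : IsBoundedUnder (· ≤ ·) l f
  · exact le_limsup_of_frequently_le (Frequently.of_forall hf) hb
  · rw [Real.limsup_of_not_isBoundedUnder hb]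

section AsympDiam

variable {E : Type*} [NormedAddCommGroup E] {ι : Type*} [Preorder ι] {x : ι → E}

theorem tailDiam_nonneg (x : ι → E) (α : ι) : 0 ≤ tailDiam x α :=
  Real.sSup_nonneg <| by rintro _ ⟨β, -, γ, -, rfl⟩; exact norm_nonneg _

theorem asympDiamNet_nonneg (x : ι → E) : 0 ≤ asympDiamNet x :=
  Real.sInf_nonneg <| by rintro _ ⟨α, rfl⟩; exact tailDiam_nonneg x α

theorem asympDiamNet_le_tailDiam (x : ι → E) (α : ι) : asympDiamNet x ≤ tailDiam x α :=
  csInf_le ⟨0, by rintro _ ⟨α, rfl⟩; exact tailDiam_nonneg x α⟩ ⟨α, rfl⟩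

theorem le_asympDiamNet [Nonempty ι] {r : ℝ} (h : ∀ α, r ≤ tailDiam x α) : r ≤ asympDiamNet x :=
  le_csInf ⟨_, Classical.arbitrary ι, rfl⟩ <| by rintro _ ⟨α, rfl⟩; exact h α

theorem norm_sub_le_tailDiam (hx : IsBounded (range x)) {α β γ : ι} (hβ : α ≤ β)
    (hγ : α ≤ γ) : ‖x β - x γ‖ ≤ tailDiam x α := by
  refine le_csSup ⟨diam (range x), ?_⟩ ⟨β, hβ, γ, hγ, rfl⟩
  rintro _ ⟨β', -, γ', -, rfl⟩
  rw [← dist_eq_norm]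
  exact dist_le_diam_of_mem hx (mem_range_self β') (mem_range_self γ')

theorem asympDiamNet_le_diam [Nonempty ι] {K : Set E} (hK : IsBounded K) (hx : ∀ α, x α ∈ K) :
    asympDiamNet x ≤ diam K := by
  refine (asympDiamNet_le_tailDiam x (Classical.arbitrary ι)).trans (Real.sSup_le ?_ diam_nonneg)
  rintro _ ⟨β, -, γ, -, rfl⟩
  rw [← dist_eq_norm]
  exact dist_le_diam_of_mem hK (hx β) (hx γ)

end AsympDiam

theorem diam_closure_convexHull_image_Ici_le {ι : Type*} [Preorder ι] (x : ι → X)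
    (hx : IsBounded (range x)) (α : ι) :
    diam (closure (convexHull ℝ (x '' Ici α))) ≤ tailDiam x α := by
  rw [diam_closure, convexHull_diam]
  refine diam_le_of_forall_dist_le (tailDiam_nonneg x α) ?_
  rintro _ ⟨β, hβ, rfl⟩ _ ⟨γ, hγ, rfl⟩
  rw [dist_eq_norm]
  exact norm_sub_le_tailDiam hx hβ hγ

section AsympRad

variable {ι : Type*} [SemilatticeSup ι] [Nonempty ι] {x : ι → X}

theorem asympRadNet_nonneg (x : ι → X) : 0 ≤ asympRadNet x :=
  Real.sInf_nonneg <| by rintro _ ⟨y, -, rfl⟩; exact Real.limsup_nonneg fun _ => norm_nonneg _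

theorem asympRadNet_le_limsup {y : X} (hy : y ∈ closure (convexHull ℝ (range x))) :
    asympRadNet x ≤ limsup (fun α => ‖x α - y‖) atTop :=
  csInf_le ⟨0, by rintro _ ⟨y, -, rfl⟩; exact Real.limsup_nonneg fun _ => norm_nonneg _⟩
    ⟨y, hy, rfl⟩

theorem asympRadNet_le_chebRadius {C : Set X} (hC : C ⊆ closure (convexHull ℝ (range x)))
    (hCb : IsBounded C) (hxC : ∀ᶠ α in atTop, x α ∈ C) : asympRadNet x ≤ chebRadius C := by
  refine le_chebRadius (hxC.exists.elim fun α hα => ⟨x α, hα⟩) fun y hy => ?_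
  refine (asympRadNet_le_limsup (hC hy)).trans (limsup_le_of_le ?_ ?_)
  · exact isCoboundedUnder_le_of_le atTop fun α => norm_nonneg _
  · exact hxC.mono fun α hα => norm_sub_le_chebRadiusAt hCb hα

theorem mul_asympRadNet_le_asympDiamNet {k : ℝ}
    (hk : ∀ K : Set X, K.Nonempty → Convex ℝ K → IsBounded K → k * chebRadius K ≤ diam K)
    (x : ι → X) (hx : IsBounded (range x)) : k * asympRadNet x ≤ asympDiamNet x := by
  rcases le_or_gt k 0 with hk0 | hk0
  · exact (mul_nonpos_of_nonpos_of_nonneg hk0 (asympRadNet_nonneg x)).trans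
      (asympDiamNet_nonneg x)
  refine le_asympDiamNet fun α => ?_
  set C := closure (convexHull ℝ (x '' Ici α))
  have hCb : IsBounded C := (isBounded_convexHull.2 (hx.subset (image_subset_range _ _))).closure
  have hxC : ∀ᶠ β in atTop, x β ∈ C :=
    eventually_atTop.2 ⟨α, fun β hβ => subset_closure (subset_convexHull ℝ _ ⟨β, hβ, rfl⟩)⟩
  calc k * asympRadNet x
      ≤ k * chebRadius C := by
        gcongr
        exact asympRadNet_le_chebRadius
          (closure_mono (convexHull_mono (image_subset_range _ _))) hCb hxC
    _ ≤ diam C := hk C (hxC.exists.elim fun β hβ => ⟨x β, hβ⟩)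
        (convex_convexHull ℝ _).closure hCb
    _ ≤ tailDiam x α := diam_closure_convexHull_image_Ici_le x hx α

theorem chebRadius_le_asympRadNet {K : Set X} (hK : Convex ℝ K) (hKb : IsBounded K)
    (hx : ∀ α, x α ∈ K) (hfreq : ∀ p ∈ K, ∃ᶠ α in atTop, x α = p) :
    chebRadius K ≤ asympRadNet x := by
  have hKne : K.Nonempty := ⟨_, hx (Classical.arbitrary ι)⟩
  refine le_csInf ⟨_, _, subset_closure (subset_convexHull ℝ _ (mem_range_self
    (Classical.arbitrary ι))), rfl⟩ ?_
  rintro _ ⟨z, hz, rfl⟩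
  obtain ⟨r, hr⟩ := hKb.subset_closedBall z
  have hbdd : IsBoundedUnder (· ≤ ·) atTop fun α => ‖x α - z‖ :=
    isBoundedUnder_of ⟨r, fun α => by simpa [dist_eq_norm] using hr (hx α)⟩
  calc chebRadius K ≤ chebRadiusAt K z := chebRadius_le_chebRadiusAt_of_mem_closure hKb
        (closure_mono (convexHull_min (range_subset_iff.2 hx) hK) hz)
    _ ≤ limsup (fun α => ‖x α - z‖) atTop := chebRadiusAt_le hKne fun p hp =>
        le_limsup_of_frequently_le ((hfreq p hp).mono fun α h => h ▸ le_rfl) hbdd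

end AsympRad

theorem Multiset.exists_frequently_eq (α : Type*) [Nonempty α] :
    ∃ f : Multiset α → α, ∀ a, ∃ᶠ m in atTop, f m = a := by
  classical
  let IsStrictMode (m : Multiset α) (a : α) : Prop := ∀ b ≠ a, m.count b < m.count a
  refine ⟨fun m => if h : ∃ a, IsStrictMode m a then h.choose else Classical.arbitrary α,
    fun a => frequently_atTop.2 fun m => ?_⟩
  set t := m + replicate (card m + 1) a
  have hmode : IsStrictMode t a := fun b hb => by
    simp only [t, count_add, count_replicate_self, count_replicate, if_neg hb.symm]
    have := count_le_card b m
    omega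
  have hex : ∃ a, IsStrictMode t a := ⟨a, hmode⟩
  refine ⟨t, le_add_right _ _, ?_⟩
  dsimp only
  rw [dif_pos hex]
  by_contra hne
  exact lt_asymm (hmode _ hne) (hex.choose_spec a (Ne.symm hne))

theorem mul_chebRadius_le_diam {X : Type u} [NormedAddCommGroup X] [NormedSpace ℝ X] {k : ℝ}
    (hk : ∀ (ι : Type u) [SemilatticeSup ι] [Nonempty ι] (x : ι → X),
      BddAbove (range fun α => ‖x α‖) → k * asympRadNet x ≤ asympDiamNet x)
    {K : Set X} (hne : K.Nonempty) (hK : Convex ℝ K) (hKb : IsBounded K) :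
    k * chebRadius K ≤ diam K := by
  classical
  rcases le_or_gt k 0 with hk0 | hk0
  · exact (mul_nonpos_of_nonpos_of_nonneg hk0 (chebRadius_nonneg K)).trans diam_nonneg
  have : Nonempty K := hne.to_subtype
  obtain ⟨f, hf⟩ := Multiset.exists_frequently_eq K
  let x : Multiset K → X := fun m => f m
  have hxK : ∀ m, x m ∈ K := fun m => (f m).2
  obtain ⟨M, hM⟩ := hKb.exists_norm_le
  calc k * chebRadius K
      ≤ k * asympRadNet x := by
        gcongr
        exact chebRadius_le_asympRadNet hK hKb hxK fun p hp =>
          (hf ⟨p, hp⟩).mono fun m hm => by simp [x, hm]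
    _ ≤ asympDiamNet x := hk _ x ⟨M, by rintro _ ⟨m, rfl⟩; exact hM _ (hxK m)⟩
    _ ≤ diam K := asympDiamNet_le_diam hKb hxK

theorem stmt7_general (X : Type u) [NormedAddCommGroup X] [NormedSpace ℝ X] :
    normalStructureCoeff X =
      sSup {k : ℝ | ∀ (ι : Type u) [SemilatticeSup ι] [Nonempty ι] (x : ι → X),
        BddAbove (Set.range fun α => ‖x α‖) →
        k * asympRadNet x ≤ asympDiamNet x} := by
  refine congrArg sSup (Set.ext fun k => ⟨fun hk ι _ _ x hx => ?_, fun hk K => ?_⟩)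
  · obtain ⟨M, hM⟩ := hx
    exact mul_asympRadNet_le_asympDiamNet hk x
      (isBounded_iff_forall_norm_le.2 ⟨M, by rintro _ ⟨α, rfl⟩; exact hM ⟨α, rfl⟩⟩)
  · exact mul_chebRadius_le_diam hk

/-- For any Banach space `X`, the normal structure coefficient
equals `sup{k : k·r_a(x_α) ≤ diam_a(x_α) for every bounded net (x_α) in X}`. -/
theorem stmt7 (X : Type u) [NormedAddCommGroup X] [NormedSpace ℝ X] [CompleteSpace X] :
    normalStructureCoeff X =
      sSup {k : ℝ | ∀ (ι : Type u) [SemilatticeSup ι] [Nonempty ι] (x : ι → X),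
        BddAbove (Set.range fun α => ‖x α‖) →
        k * asympRadNet x ≤ asympDiamNet x} :=
  stmt7_general X
end
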